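/- arXiv:1201.4024 — 2 statements merged into one kernel-verified Lean document; each statement's English description precedes it below -/
import Mathlib

section
/- Let X be the dual space of a separable Banach space, Y a Banach space, k a natural number, and φ=(φ_j)_{j=0,…,k} a vector of C-admissible weight functions on X. Then the weighted space B^φ_k(X;Y), equipped with the norm ‖f‖_{φ,k}, is a Banach space (i.e., it is complete). -/
/- STATEMENT 0: Completeness of the weighted space `B^φ_k(X;Y)` for a vector
`φ = (φ_j)_{j=0,…,k}` of C-admissible weight functions on the dual `X = W*` of a
separable Banach space `W`, with values in a Banach space `Y`.
"Banach space" is rendered as: every Cauchy sequence for the norm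
`‖f‖_{φ,k} = Σ_{j≤k} sup_x φ_j(x)⁻¹ ‖D^j f(x)‖` has a limit in the space. -/

noncomputable section

open Metric

/-- A C-admissible weight function on the dual `X = W*`: bounded below by a positive
constant, weak-* lower semicontinuous, and bounded on a closed ball around each point. -/
structure IsCAdmissible {W : Type*} [NormedAddCommGroup W] [NormedSpace ℝ W]
    (φ : StrongDual ℝ W → ℝ) : Prop where
  bounded_below : ∃ δ : ℝ, 0 < δ ∧ ∀ x, δ ≤ φ x
  weakStar_lsc : LowerSemicontinuous fun x : WeakDual ℝ W => φ (WeakDual.toStrongDual x)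
  loc_bounded : ∀ x : StrongDual ℝ W, ∃ ε : ℝ, 0 < ε ∧
    ∃ M : ℝ, ∀ y ∈ closedBall x ε, φ y ≤ M

/-- Membership in `B^φ_k(X;Y)`: `k` times continuously Fréchet differentiable with
all derivatives of order `j ≤ k` bounded by the weight `φ_j`. -/
def MemBk {X Y : Type*} [NormedAddCommGroup X] [NormedSpace ℝ X]
    [NormedAddCommGroup Y] [NormedSpace ℝ Y]
    (k : ℕ) (φ : ℕ → X → ℝ) (f : X → Y) : Prop :=
  ContDiff ℝ (k : ℕ) f ∧
    ∀ j ≤ k, ∃ C : ℝ, ∀ x, ‖iteratedFDeriv ℝ j f x‖ ≤ C * φ j x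

/-! The derivatives `D^j f_n` (`j ≤ k`) are Cauchy in the weighted sup norms, hence pointwise
Cauchy, with pointwise limits `G_j`; since each weight is bounded on a neighbourhood of every
point, the convergence `D^j f_n → G_j` is even locally uniform. Locally uniform convergence of
`D^j f_n` and `D^(j+1) f_n` makes `G_j` differentiable with derivative `G_(j+1)`, so `G_0` is
`C^k` with `D^j G_0 = G_j`. Finally the weighted estimates survive the pointwise limit. -/

open Filter Topology

theorem iteratedFDeriv_sub_apply_of_le {𝕜 E F : Type*} [NontriviallyNormedField 𝕜]
    [NormedAddCommGroup E] [NormedSpace 𝕜 E] [NormedAddCommGroup F] [NormedSpace 𝕜 F]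
    {f g : E → F} {k j : ℕ} (hf : ContDiff 𝕜 k f) (hg : ContDiff 𝕜 k g) (hj : j ≤ k) (x : E) :
    iteratedFDeriv 𝕜 j (f - g) x = iteratedFDeriv 𝕜 j f x - iteratedFDeriv 𝕜 j g x :=
  iteratedFDeriv_sub_apply (hf.of_le (by norm_cast)).contDiffAt (hg.of_le (by norm_cast)).contDiffAt

section UniformLimits

variable {𝕜 : Type*} [NontriviallyNormedField 𝕜] [IsRCLikeNormedField 𝕜]
  {E : Type*} [NormedAddCommGroup E] [NormedSpace 𝕜 E]
  {F : Type*} [NormedAddCommGroup F] [NormedSpace 𝕜 F]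
  {ι : Type*} {l : Filter ι} [l.NeBot] {f : ι → E → F} {k : ℕ}
  {G : (j : ℕ) → E → ContinuousMultilinearMap 𝕜 (fun _ : Fin j => E) F}

theorem hasFDerivAt_of_tendstoLocallyUniformly_iteratedFDeriv {j : ℕ}
    {g : E → ContinuousMultilinearMap 𝕜 (fun _ : Fin j => E) F}
    {g' : E → ContinuousMultilinearMap 𝕜 (fun _ : Fin (j + 1) => E) F}
    (hf : ∀ n, ContDiff 𝕜 (j + 1) (f n))
    (hg : TendstoLocallyUniformly (fun n => iteratedFDeriv 𝕜 j (f n)) g l)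
    (hg' : TendstoLocallyUniformly (fun n => iteratedFDeriv 𝕜 (j + 1) (f n)) g' l) (x : E) :
    HasFDerivAt g
      (continuousMultilinearCurryLeftEquiv 𝕜 (fun _ : Fin (j + 1) => E) F (g' x)) x := by
  set e := continuousMultilinearCurryLeftEquiv 𝕜 (fun _ : Fin (j + 1) => E) F
  have hderiv : ∀ n y, HasFDerivAt (iteratedFDeriv 𝕜 j (f n))
      (e (iteratedFDeriv 𝕜 (j + 1) (f n) y)) y := fun n y =>
    ((hf n).differentiable_iteratedFDeriv (by norm_cast; omega) y).hasFDerivAt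
  have hg'e : TendstoLocallyUniformlyOn (fun n y => e (iteratedFDeriv 𝕜 (j + 1) (f n) y))
      (fun y => e (g' y)) l Set.univ :=
    tendstoLocallyUniformlyOn_univ.2
      (e.isometry.uniformContinuous.comp_tendstoLocallyUniformly hg')
  exact hasFDerivAt_of_tendstoLocallyUniformlyOn isOpen_univ hg'e (fun n y _ => hderiv n y)
    (fun y _ => (tendstoLocallyUniformlyOn_univ.2 hg).tendsto_at (Set.mem_univ y))
    (Set.mem_univ x)

theorem iteratedFDeriv_eq_of_tendstoLocallyUniformly (hf : ∀ n, ContDiff 𝕜 k (f n))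
    (hG : ∀ j ≤ k, TendstoLocallyUniformly (fun n => iteratedFDeriv 𝕜 j (f n)) (G j) l) :
    ∀ j ≤ k, iteratedFDeriv 𝕜 j (fun x => G 0 x 0) = G j
  | 0, _ => by
    ext x m
    rw [iteratedFDeriv_zero_apply, Subsingleton.elim m 0]
  | j + 1, hj => by
    have hG' := hasFDerivAt_of_tendstoLocallyUniformly_iteratedFDeriv
      (fun n => (hf n).of_le (by norm_cast)) (hG j (by omega)) (hG (j + 1) hj)
    funext x
    rw [iteratedFDeriv_succ_eq_comp_left, Function.comp_apply,
      iteratedFDeriv_eq_of_tendstoLocallyUniformly hf hG j (by omega), (hG' x).fderiv,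
      LinearIsometryEquiv.symm_apply_apply]

theorem contDiff_of_tendstoLocallyUniformly_iteratedFDeriv (hf : ∀ n, ContDiff 𝕜 k (f n))
    (hG : ∀ j ≤ k, TendstoLocallyUniformly (fun n => iteratedFDeriv 𝕜 j (f n)) (G j) l) :
    ContDiff 𝕜 k (fun x => G 0 x 0) := by
  have hk : ((k : ℕ∞) : WithTop ℕ∞) = (k : WithTop ℕ∞) := rfl
  rw [← hk, contDiff_iff_continuous_differentiable]
  refine ⟨fun j hj => ?_, fun j hj => ?_⟩ <;> norm_cast at hj <;>
    rw [iteratedFDeriv_eq_of_tendstoLocallyUniformly hf hG j (by omega)]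
  · exact (hG j hj).continuous (Frequently.of_forall fun n =>
      (hf n).continuous_iteratedFDeriv (by norm_cast))
  · exact fun x => (hasFDerivAt_of_tendstoLocallyUniformly_iteratedFDeriv
      (fun n => (hf n).of_le (by norm_cast)) (hG j (by omega)) (hG (j + 1) hj) x).differentiableAt

end UniformLimits

section Weighted

variable {X Z : Type*} [NormedAddCommGroup Z] {φ : X → ℝ} {g : ℕ → X → Z} {G : X → Z}

/-- Cauchy for the weighted sup norm `sup_x φ(x)⁻¹ ‖·‖`. -/
def WeightedCauchySeq (φ : X → ℝ) (g : ℕ → X → Z) : Prop :=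
  ∀ ε > 0, ∃ N, ∀ m ≥ N, ∀ n ≥ N, ∀ x, ‖g m x - g n x‖ ≤ ε * φ x

def WeightedTendsto (φ : X → ℝ) (g : ℕ → X → Z) (G : X → Z) : Prop :=
  ∀ ε > 0, ∃ N, ∀ n ≥ N, ∀ x, ‖g n x - G x‖ ≤ ε * φ x

theorem norm_sub_le_of_tendsto_of_forall_ge {a : ℕ → Z} {L : Z} (hL : Tendsto a atTop (𝓝 L))
    {n N : ℕ} {c : ℝ} (h : ∀ m ≥ N, ‖a n - a m‖ ≤ c) : ‖a n - L‖ ≤ c :=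
  le_of_tendsto (tendsto_const_nhds.sub hL).norm (eventually_atTop.2 ⟨N, h⟩)

theorem WeightedCauchySeq.cauchySeq (h : WeightedCauchySeq φ g) (x : X) :
    CauchySeq fun n => g n x := by
  refine Metric.cauchySeq_iff'.2 fun ε hε => ?_
  obtain ⟨δ, hδ, hδε⟩ := exists_pos_mul_lt hε |φ x|
  obtain ⟨N, hN⟩ := h δ hδ
  refine ⟨N, fun n hn => ?_⟩
  rw [dist_eq_norm]
  calc ‖g n x - g N x‖ ≤ δ * φ x := hN n hn N le_rfl x
    _ ≤ |φ x| * δ := by rw [mul_comm]; gcongr; exact le_abs_self _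
    _ < ε := hδε

theorem WeightedCauchySeq.weightedTendsto_limUnder [CompleteSpace Z]
    (h : WeightedCauchySeq φ g) :
    WeightedTendsto φ g fun x => limUnder atTop fun n => g n x := by
  intro ε hε
  obtain ⟨N, hN⟩ := h ε hε
  exact ⟨N, fun n hn x => norm_sub_le_of_tendsto_of_forall_ge
    (h.cauchySeq x).tendsto_limUnder fun m hm => hN n hn m hm x⟩

theorem WeightedTendsto.tendstoLocallyUniformly [TopologicalSpace X] (h : WeightedTendsto φ g G)
    (hφ : ∀ x, (𝓝 x).IsBoundedUnder (· ≤ ·) φ) : TendstoLocallyUniformly g G atTop := by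
  refine Metric.tendstoLocallyUniformly_iff.2 fun ε hε x => ?_
  obtain ⟨M, hM⟩ := hφ x
  obtain ⟨δ, hδ, hδε⟩ := exists_pos_mul_lt hε |M|
  obtain ⟨N, hN⟩ := h δ hδ
  refine ⟨_, hM, eventually_atTop.2 ⟨N, fun n hn y (hy : φ y ≤ M) => ?_⟩⟩
  rw [dist_comm, dist_eq_norm]
  calc ‖g n y - G y‖ ≤ δ * φ y := hN n hn y
    _ ≤ |M| * δ := by rw [mul_comm]; gcongr; exact hy.trans (le_abs_self M)
    _ < ε := hδε

theorem WeightedTendsto.exists_bound (h : WeightedTendsto φ g G)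
    (hg : ∀ n, ∃ C, ∀ x, ‖g n x‖ ≤ C * φ x) : ∃ C, ∀ x, ‖G x‖ ≤ C * φ x := by
  obtain ⟨N, hN⟩ := h 1 one_pos
  obtain ⟨C, hC⟩ := hg N
  refine ⟨C + 1, fun x => ?_⟩
  calc ‖G x‖ ≤ ‖g N x‖ + ‖g N x - G x‖ := norm_le_insert _ _
    _ ≤ C * φ x + 1 * φ x := add_le_add (hC x) (hN N le_rfl x)
    _ = (C + 1) * φ x := by ring

end Weighted

theorem IsCAdmissible.isBoundedUnder_le_nhds {W : Type*} [NormedAddCommGroup W]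
    [NormedSpace ℝ W] {φ : StrongDual ℝ W → ℝ} (hφ : IsCAdmissible φ) (x : StrongDual ℝ W) :
    (𝓝 x).IsBoundedUnder (· ≤ ·) φ := by
  obtain ⟨ε, hε, M, hM⟩ := hφ.loc_bounded x
  exact ⟨M, eventually_map.2 (eventually_of_mem (closedBall_mem_nhds x hε) hM)⟩

theorem weighted_Ck_space_is_complete_general
    (W : Type*) [NormedAddCommGroup W] [NormedSpace ℝ W]
    (Y : Type*) [NormedAddCommGroup Y] [NormedSpace ℝ Y] [CompleteSpace Y]
    (k : ℕ) (φ : ℕ → StrongDual ℝ W → ℝ)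
    (hφ : ∀ j ≤ k, IsCAdmissible (φ j))
    -- a Cauchy sequence in `B^φ_k(X;Y)`:
    (f : ℕ → StrongDual ℝ W → Y)
    (hf : ∀ n, MemBk k φ (f n))
    (hCauchy : ∀ ε : ℝ, 0 < ε → ∃ N : ℕ, ∀ m ≥ N, ∀ n ≥ N, ∀ j ≤ k,
      ∀ x, ‖iteratedFDeriv ℝ j (f m - f n) x‖ ≤ ε * φ j x) :
    -- it converges in the `φ`-norm to an element of `B^φ_k(X;Y)`:
    ∃ g : StrongDual ℝ W → Y, MemBk k φ g ∧
      ∀ ε : ℝ, 0 < ε → ∃ N : ℕ, ∀ n ≥ N, ∀ j ≤ k,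
        ∀ x, ‖iteratedFDeriv ℝ j (f n - g) x‖ ≤ ε * φ j x := by
  have hD : ∀ j ≤ k, WeightedCauchySeq (φ j) fun n => iteratedFDeriv ℝ j (f n) :=
    fun j hj ε hε => (hCauchy ε hε).imp fun N hN m hm n hn x => by
      rw [← iteratedFDeriv_sub_apply_of_le (hf m).1 (hf n).1 hj]
      exact hN m hm n hn j hj x
  set G := fun j x => limUnder atTop fun n => iteratedFDeriv ℝ j (f n) x
  have hLU : ∀ j ≤ k, TendstoLocallyUniformly (fun n => iteratedFDeriv ℝ j (f n)) (G j) atTop :=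
    fun j hj => (hD j hj).weightedTendsto_limUnder.tendstoLocallyUniformly
      (hφ j hj).isBoundedUnder_le_nhds
  have hg := contDiff_of_tendstoLocallyUniformly_iteratedFDeriv (fun n => (hf n).1) hLU
  have hDg := iteratedFDeriv_eq_of_tendstoLocallyUniformly (fun n => (hf n).1) hLU
  refine ⟨fun x => G 0 x 0, ⟨hg, fun j hj => ?_⟩, fun ε hε => ?_⟩
  · rw [hDg j hj]
    exact (hD j hj).weightedTendsto_limUnder.exists_bound fun n => (hf n).2 j hj
  · obtain ⟨N, hN⟩ := hCauchy ε hε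
    refine ⟨N, fun n hn j hj x => ?_⟩
    rw [iteratedFDeriv_sub_apply_of_le (hf n).1 hg hj, hDg j hj]
    refine norm_sub_le_of_tendsto_of_forall_ge (N := N)
      ((hD j hj).cauchySeq x).tendsto_limUnder fun m hm => ?_
    rw [← iteratedFDeriv_sub_apply_of_le (hf n).1 (hf m).1 hj]
    exact hN n hn m hm j hj x

theorem weighted_Ck_space_is_complete
    (W : Type*) [NormedAddCommGroup W] [NormedSpace ℝ W] [CompleteSpace W]
    [TopologicalSpace.SeparableSpace W]
    (Y : Type*) [NormedAddCommGroup Y] [NormedSpace ℝ Y] [CompleteSpace Y]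
    (k : ℕ) (φ : ℕ → StrongDual ℝ W → ℝ)
    (hφ : ∀ j ≤ k, IsCAdmissible (φ j))
    -- a Cauchy sequence in `B^φ_k(X;Y)`:
    (f : ℕ → StrongDual ℝ W → Y)
    (hf : ∀ n, MemBk k φ (f n))
    (hCauchy : ∀ ε : ℝ, 0 < ε → ∃ N : ℕ, ∀ m ≥ N, ∀ n ≥ N, ∀ j ≤ k,
      ∀ x, ‖iteratedFDeriv ℝ j (f m - f n) x‖ ≤ ε * φ j x) :
    -- it converges in the `φ`-norm to an element of `B^φ_k(X;Y)`:
    ∃ g : StrongDual ℝ W → Y, MemBk k φ g ∧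
      ∀ ε : ℝ, 0 < ε → ∃ N : ℕ, ∀ n ≥ N, ∀ j ≤ k,
        ∀ x, ‖iteratedFDeriv ℝ j (f n - g) x‖ ≤ ε * φ j x :=
  weighted_Ck_space_is_complete_general W Y k φ hφ f hf hCauchy

end
end

section
/- On X = ℝ with the admissible weight function ψ(x) := 1 + x² χ_{(−∞,0)}(x) + x^{−2} χ_{(0,∞)}(x), there exists a Cauchy sequence in the weighted space B^ψ_1(ℝ) (with weight vector (ψ, ψ)) that has no limit in B^ψ_1(ℝ); concretely, the sequence of smooth monotone functions f_n with f_n(x) = 0 for x ≤ 0, f_n(x) = 1 for x ≥ 1/n, 0 ≤ f_n ≤ 1, and |f_n'| ≤ Cn on (0, 1/n) (e.g. f_n(x) = f_1(nx)) is Cauchy in B^ψ_1(ℝ), yet its only possible limit (under pointwise evaluation) is the indicator function of (0,∞), which is not continuous and hence not in B^ψ_1(ℝ). In particular, B^ψ_1(ℝ) is not complete for this ψ, which is admissible but not C-admissible. -/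
/-! Near `0⁺` the weight is `ψ(x) ≥ x⁻²`, so on the transition layer `(0, δ)` of a cut-off a
function bounded by `M` has weighted size at most `M δ²`. With `δ = 1/(n+1)` this makes
`f_n → χ_{(0,∞)}` and `f_n' → 0` in the weighted sup norms (`|f_n'| ≲ n+1` costs one power of
`δ`), so `(f_n)` is Cauchy in `B^ψ_1`. Weighted convergence implies pointwise convergence, so
a limit in `B^ψ_1` would be the discontinuous indicator `χ_{(0,∞)}`. -/

noncomputable section

open Filter Topology

namespace Stmt19

def psi (x : ℝ) : ℝ :=
  1 + (if x < 0 then x ^ 2 else 0) + (if 0 < x then (x ^ 2)⁻¹ else 0)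

/-- Membership in `B^{(ψ,ψ)}_1(ℝ)`: continuously differentiable with `f` and `f'`
bounded by multiples of `ψ`. -/
def MemB1 (f : ℝ → ℝ) : Prop :=
  ContDiff ℝ 1 f ∧ (∃ C : ℝ, ∀ x, |f x| ≤ C * psi x) ∧
    ∃ C : ℝ, ∀ x, |deriv f x| ≤ C * psi x

section TendstoWeighted

variable {ι X : Type*} {l : Filter ι} {w : X → ℝ} {u : ι → X → ℝ} {a : X → ℝ}

def TendstoWeighted (l : Filter ι) (w : X → ℝ) (u : ι → X → ℝ) (a : X → ℝ) : Prop :=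
  ∀ ε > 0, ∀ᶠ n in l, ∀ x, |u n x - a x| ≤ ε * w x

lemma tendstoWeighted_of_le_mul (hw : ∀ x, 0 ≤ w x) {r : ι → ℝ} (hr : Tendsto r l (𝓝 0))
    (h : ∀ n x, |u n x - a x| ≤ r n * w x) : TendstoWeighted l w u a := fun ε hε => by
  filter_upwards [hr.eventually (ge_mem_nhds hε)] with n hn x
  exact (h n x).trans (mul_le_mul_of_nonneg_right hn (hw x))

lemma TendstoWeighted.tendsto_apply (h : TendstoWeighted l w u a) (x : X) :
    Tendsto (fun n => u n x) l (𝓝 (a x)) := by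
  refine Metric.tendsto_nhds.2 fun ε hε => ?_
  have hc : 0 < |w x| + 1 := by positivity
  filter_upwards [h (ε / (|w x| + 1)) (div_pos hε hc)] with n hn
  rw [Real.dist_eq]
  calc |u n x - a x| ≤ ε / (|w x| + 1) * w x := hn x
    _ ≤ ε / (|w x| + 1) * |w x| := by gcongr; exact le_abs_self _
    _ < ε := by rw [div_mul_eq_mul_div, div_lt_iff₀ hc]; nlinarith

lemma TendstoWeighted.eventually_cauchy (h : TendstoWeighted l w u a) {ε : ℝ} (hε : 0 < ε) :
    ∀ᶠ pq in l ×ˢ l, ∀ x, |u pq.1 x - u pq.2 x| ≤ ε * w x := by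
  have h2 := h (ε / 2) (half_pos hε)
  filter_upwards [h2.prod_mk h2] with pq hpq x
  have := abs_sub_le (u pq.1 x) (a x) (u pq.2 x)
  rw [abs_sub_comm (a x)] at this
  linarith [hpq.1 x, hpq.2 x]

end TendstoWeighted

lemma one_le_psi (x : ℝ) : 1 ≤ psi x := by
  have h1 : (0 : ℝ) ≤ if x < 0 then x ^ 2 else 0 := by split_ifs <;> positivity
  have h2 : (0 : ℝ) ≤ if 0 < x then (x ^ 2)⁻¹ else 0 := by split_ifs <;> positivity
  unfold psi
  linarith

lemma psi_nonneg (x : ℝ) : 0 ≤ psi x := zero_le_one.trans (one_le_psi x)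

lemma inv_sq_le_psi {x : ℝ} (hx : 0 < x) : (x ^ 2)⁻¹ ≤ psi x := by
  unfold psi
  rw [if_neg hx.not_gt, if_pos hx]
  linarith

lemma abs_le_mul_sq_mul_psi {φ : ℝ → ℝ} {δ M : ℝ} (hM : 0 ≤ M)
    (hout : ∀ x ∉ Set.Ioo 0 δ, φ x = 0) (hin : ∀ x ∈ Set.Ioo 0 δ, |φ x| ≤ M) (x : ℝ) :
    |φ x| ≤ M * δ ^ 2 * psi x := by
  by_cases hx : x ∈ Set.Ioo 0 δ
  · have hδ : 1 ≤ δ ^ 2 * (x ^ 2)⁻¹ := by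
      rw [← div_eq_mul_inv, one_le_div (pow_pos hx.1 2)]
      exact pow_le_pow_left₀ hx.1.le hx.2.le 2
    calc |φ x| ≤ M * 1 := by rw [mul_one]; exact hin x hx
      _ ≤ M * (δ ^ 2 * (x ^ 2)⁻¹) := by gcongr
      _ ≤ M * (δ ^ 2 * psi x) := by gcongr; exact inv_sq_le_psi hx.1
      _ = M * δ ^ 2 * psi x := by ring
  · rw [hout x hx, abs_zero]
    exact mul_nonneg (by positivity) (psi_nonneg x)

lemma deriv_eq_zero_of_notMem_Ioo {f : ℝ → ℝ} {a b x : ℝ} (hf0 : ∀ y, 0 ≤ f y)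
    (hf1 : ∀ y, f y ≤ 1) (ha : ∀ y ≤ a, f y = 0) (hb : ∀ y, b ≤ y → f y = 1)
    (hx : x ∉ Set.Ioo a b) : deriv f x = 0 := by
  rcases le_or_gt x a with hxa | hax
  · refine IsLocalMin.deriv_eq_zero (Eventually.of_forall fun y => ?_)
    rw [ha x hxa]
    exact hf0 y
  · refine IsLocalMax.deriv_eq_zero (Eventually.of_forall fun y => ?_)
    rw [hb x (not_lt.1 fun hxb => hx ⟨hax, hxb⟩)]
    exact hf1 y

lemma deriv_smoothTransition_eq_zero {x : ℝ} (hx : x ∉ Set.Ioo 0 1) :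
    deriv Real.smoothTransition x = 0 :=
  deriv_eq_zero_of_notMem_Ioo Real.smoothTransition.nonneg Real.smoothTransition.le_one
    (fun _ => Real.smoothTransition.zero_of_nonpos) (fun _ => Real.smoothTransition.one_of_one_le)
    hx

lemma exists_abs_deriv_smoothTransition_le : ∃ C, ∀ x, |deriv Real.smoothTransition x| ≤ C := by
  have hcont : Continuous (deriv Real.smoothTransition) :=
    (Real.smoothTransition.contDiff (n := 1)).continuous_deriv le_rfl
  have hsupp : HasCompactSupport (deriv Real.smoothTransition) :=
    HasCompactSupport.intro isCompact_Icc fun x hx =>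
      deriv_smoothTransition_eq_zero fun hx' => hx (Set.Ioo_subset_Icc_self hx')
  exact hcont.bounded_above_of_compact_support hsupp

def cutoff (n : ℕ) (x : ℝ) : ℝ :=
  Real.smoothTransition (((n : ℝ) + 1) * x)

def layer (n : ℕ) : ℝ :=
  ((n : ℝ) + 1)⁻¹

lemma tendsto_layer : Tendsto layer atTop (𝓝 0) := by
  show Tendsto (fun n : ℕ => ((n : ℝ) + 1)⁻¹) atTop (𝓝 0)
  simpa only [one_div] using tendsto_one_div_add_atTop_nhds_zero_nat (𝕜 := ℝ)

lemma contDiff_cutoff (n : ℕ) {k : ℕ∞} : ContDiff ℝ k (cutoff n) :=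
  Real.smoothTransition.contDiff.comp (contDiff_const.mul contDiff_id)

lemma monotone_cutoff (n : ℕ) : Monotone (cutoff n) :=
  Real.smoothTransition.monotone.comp fun _ _ hxy => by gcongr

lemma cutoff_nonneg (n : ℕ) (x : ℝ) : 0 ≤ cutoff n x :=
  Real.smoothTransition.nonneg _

lemma cutoff_le_one (n : ℕ) (x : ℝ) : cutoff n x ≤ 1 :=
  Real.smoothTransition.le_one _

lemma cutoff_of_nonpos (n : ℕ) {x : ℝ} (hx : x ≤ 0) : cutoff n x = 0 :=
  Real.smoothTransition.zero_of_nonpos (mul_nonpos_of_nonneg_of_nonpos (by positivity) hx)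

lemma cutoff_of_layer_le (n : ℕ) {x : ℝ} (hx : layer n ≤ x) : cutoff n x = 1 := by
  refine Real.smoothTransition.one_of_one_le ?_
  rwa [layer, inv_le_iff_one_le_mul₀' (by positivity)] at hx

lemma abs_cutoff_sub_indicator_le (n : ℕ) (x : ℝ) :
    |cutoff n x - Set.indicator (Set.Ioi 0) (fun _ => 1) x| ≤ layer n ^ 2 * psi x := by
  set φ := fun y => cutoff n y - Set.indicator (Set.Ioi 0) (fun _ => 1) y
  have hout : ∀ y ∉ Set.Ioo 0 (layer n), φ y = 0 := by
    intro y hy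
    dsimp only [φ]
    rcases le_or_gt y 0 with hy0 | hy0
    · rw [cutoff_of_nonpos n hy0, Set.indicator_of_notMem (Set.notMem_Ioi.2 hy0), sub_self]
    · rw [cutoff_of_layer_le n (not_lt.1 fun h => hy ⟨hy0, h⟩),
        Set.indicator_of_mem (Set.mem_Ioi.2 hy0), sub_self]
  have hin : ∀ y ∈ Set.Ioo 0 (layer n), |φ y| ≤ 1 := fun y _ =>
    abs_sub_le_of_nonneg_of_le (cutoff_nonneg n y) (cutoff_le_one n y)
      (Set.indicator_nonneg (fun _ _ => zero_le_one) y)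
      (Set.indicator_apply_le' (fun _ => le_rfl) (fun _ => zero_le_one))
  simpa only [one_mul] using abs_le_mul_sq_mul_psi zero_le_one hout hin x

lemma deriv_cutoff (n : ℕ) (x : ℝ) :
    deriv (cutoff n) x = deriv Real.smoothTransition (((n : ℝ) + 1) * x) * ((n : ℝ) + 1) := by
  have hs : HasDerivAt Real.smoothTransition
      (deriv Real.smoothTransition (((n : ℝ) + 1) * x)) (((n : ℝ) + 1) * x) :=
    ((Real.smoothTransition.contDiff (n := 1)).differentiable one_ne_zero _).hasDerivAt
  exact (hs.comp x ((hasDerivAt_id x).const_mul _)).deriv.trans (by rw [mul_one])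

lemma abs_deriv_cutoff_le {C : ℝ} (hC : ∀ x, |deriv Real.smoothTransition x| ≤ C) (n : ℕ)
    (x : ℝ) : |deriv (cutoff n) x| ≤ C * ((n : ℝ) + 1) := by
  rw [deriv_cutoff, abs_mul, abs_of_pos (by positivity : (0 : ℝ) < (n : ℝ) + 1)]
  exact mul_le_mul_of_nonneg_right (hC _) (by positivity)

lemma abs_deriv_cutoff_le_mul_psi {C : ℝ} (hC : ∀ x, |deriv Real.smoothTransition x| ≤ C)
    (n : ℕ) (x : ℝ) : |deriv (cutoff n) x| ≤ C * layer n * psi x := by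
  have hC0 : 0 ≤ C := (abs_nonneg _).trans (hC 0)
  have hout : ∀ y ∉ Set.Ioo 0 (layer n), deriv (cutoff n) y = 0 :=
    fun _ => deriv_eq_zero_of_notMem_Ioo (cutoff_nonneg n) (cutoff_le_one n)
      (fun _ => cutoff_of_nonpos n) (fun _ => cutoff_of_layer_le n)
  have hbound := abs_le_mul_sq_mul_psi (mul_nonneg hC0 (by positivity)) hout
    (fun y _ => abs_deriv_cutoff_le hC n y) x
  have hlayer : ((n : ℝ) + 1) * layer n = 1 := mul_inv_cancel₀ (by positivity)
  calc |deriv (cutoff n) x| ≤ C * ((n : ℝ) + 1) * layer n ^ 2 * psi x := hbound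
    _ = C * layer n * psi x := by rw [sq, ← mul_assoc, mul_assoc C, hlayer, mul_one]

lemma memB1_cutoff (n : ℕ) : MemB1 (cutoff n) := by
  obtain ⟨C, hC⟩ := exists_abs_deriv_smoothTransition_le
  refine ⟨contDiff_cutoff n, ⟨1, fun x => ?_⟩, ⟨C * layer n, abs_deriv_cutoff_le_mul_psi hC n⟩⟩
  rw [one_mul, abs_of_nonneg (cutoff_nonneg n x)]
  exact (cutoff_le_one n x).trans (one_le_psi x)

lemma tendstoWeighted_cutoff :
    TendstoWeighted atTop psi cutoff (Set.indicator (Set.Ioi 0) fun _ => 1) :=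
  tendstoWeighted_of_le_mul psi_nonneg (by simpa using tendsto_layer.pow 2)
    abs_cutoff_sub_indicator_le

lemma tendstoWeighted_deriv_cutoff :
    TendstoWeighted atTop psi (fun n => deriv (cutoff n)) 0 := by
  obtain ⟨C, hC⟩ := exists_abs_deriv_smoothTransition_le
  refine tendstoWeighted_of_le_mul psi_nonneg (by simpa using tendsto_layer.const_mul C)
    fun n x => ?_
  simpa using abs_deriv_cutoff_le_mul_psi hC n x

lemma not_continuous_indicator_Ioi {M : Type*} [TopologicalSpace M] [T2Space M] [Zero M]
    (a : ℝ) {c : M} (hc : c ≠ 0) : ¬ Continuous (Set.indicator (Set.Ioi a) fun _ => c) := by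
  intro hcont
  have hright : Tendsto (Set.indicator (Set.Ioi a) fun _ => c) (𝓝[>] a) (𝓝 c) :=
    tendsto_const_nhds.congr' <| eventuallyEq_nhdsWithin_of_eqOn fun x hx =>
      (Set.indicator_of_mem hx _).symm
  have hat := hcont.continuousWithinAt (s := Set.Ioi a) (x := a)
  rw [ContinuousWithinAt, Set.indicator_of_notMem Set.self_notMem_Ioi] at hat
  exact hc (tendsto_nhds_unique hright hat)

theorem weighted_C1_space_not_complete :
    ∃ f : ℕ → ℝ → ℝ,
      -- smooth monotone cut-offs between 0 and 1/(n+1)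
      (∀ n, ContDiff ℝ (⊤ : ℕ∞) (f n)) ∧
      (∀ n, Monotone (f n)) ∧
      (∀ (n : ℕ) (x : ℝ), 0 ≤ f n x ∧ f n x ≤ 1) ∧
      (∀ (n : ℕ) (x : ℝ), x ≤ 0 → f n x = 0) ∧
      (∀ (n : ℕ) (x : ℝ), ((n : ℝ) + 1)⁻¹ ≤ x → f n x = 1) ∧
      (∃ C : ℝ, ∀ n, ∀ x : ℝ, |deriv (f n) x| ≤ C * ((n : ℝ) + 1)) ∧
      -- each `f n` lies in `B^ψ_1(ℝ)`
      (∀ n, MemB1 (f n)) ∧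
      -- the sequence is Cauchy for the norm `‖·‖_{(ψ,ψ),1}`
      (∀ ε : ℝ, 0 < ε → ∃ K : ℕ, ∀ p ≥ K, ∀ q ≥ K, ∀ x : ℝ,
        |f p x - f q x| ≤ ε * psi x ∧ |deriv (f p) x - deriv (f q) x| ≤ ε * psi x) ∧
      -- its only candidate limit (pointwise) is the indicator of `(0,∞)`,
      -- which is not continuous
      (∀ x : ℝ, Tendsto (fun n => f n x) atTop
        (𝓝 (Set.indicator (Set.Ioi (0 : ℝ)) (fun _ => (1 : ℝ)) x))) ∧
      ¬ Continuous (Set.indicator (Set.Ioi (0 : ℝ)) fun _ => (1 : ℝ)) ∧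
      -- and the sequence has NO limit in `B^ψ_1(ℝ)`
      ¬ ∃ g : ℝ → ℝ, MemB1 g ∧
          ∀ ε : ℝ, 0 < ε → ∃ K : ℕ, ∀ n ≥ K, ∀ x : ℝ,
            |f n x - g x| ≤ ε * psi x ∧ |deriv (f n) x - deriv g x| ≤ ε * psi x := by
  obtain ⟨C, hC⟩ := exists_abs_deriv_smoothTransition_le
  have hdisc := not_continuous_indicator_Ioi 0 (one_ne_zero' ℝ)
  refine ⟨cutoff, fun n => contDiff_cutoff n, monotone_cutoff,
    fun n x => ⟨cutoff_nonneg n x, cutoff_le_one n x⟩, fun n _ => cutoff_of_nonpos n,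
    fun n _ => cutoff_of_layer_le n, ⟨C, abs_deriv_cutoff_le hC⟩, memB1_cutoff,
    fun ε hε => ?_, tendstoWeighted_cutoff.tendsto_apply, hdisc, ?_⟩
  · have hcauchy := (tendstoWeighted_cutoff.eventually_cauchy hε).and
      (tendstoWeighted_deriv_cutoff.eventually_cauchy hε)
    rw [prod_atTop_atTop_eq] at hcauchy
    simpa only [forall_and] using eventually_atTop_prod_self'.1 hcauchy
  · rintro ⟨g, hg, hconv⟩
    have hlim : TendstoWeighted atTop psi cutoff g := fun ε hε =>
      eventually_atTop.2 <| (hconv ε hε).imp fun _ hK n hn x => (hK n hn x).1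
    have hg_eq : g = Set.indicator (Set.Ioi 0) fun _ => 1 := funext fun x =>
      tendsto_nhds_unique (hlim.tendsto_apply x) (tendstoWeighted_cutoff.tendsto_apply x)
    exact hdisc (hg_eq ▸ hg.1.continuous)

end Stmt19

end
end
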